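/- arXiv:2309.16352 — 3 statements merged into one kernel-verified Lean document; each statement's English description precedes it below -/
import Mathlib

section
/- Let P be an N×N column-stochastic real matrix, let β > 1/2 and γ > 0, and suppose that in every column of P at least β·N of the entries are bounded below by γ/N. Then the maximum pairwise column distance satisfies d(P) ≤ 1 − γ·(1 − 2(1 − β)) = 1 − γ·(2β − 1). -/
/-!
The half-`ℓ¹` distance of two probability vectors is `1 - ∑ᵢ min(pᵢ, qᵢ)`. Two columns each
having at least `βN` entries `≥ γ/N` share at least `(2β - 1)N` such rows, on each of which
the minimum is `≥ γ/N`; hence `∑ᵢ min(pᵢ, qᵢ) ≥ γ(2β - 1)`.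
-/

open Finset

section TotalVariation

variable {𝕜 : Type*} [Field 𝕜] [LinearOrder 𝕜] [IsStrictOrderedRing 𝕜]

theorem abs_sub_eq_add_sub_two_mul_min (a b : 𝕜) : |a - b| = a + b - 2 * min a b := by
  rw [abs_sub_comm, ← max_sub_min_eq_abs, ← add_sub_cancel_left (min a b) (max a b), min_add_max]
  ring

theorem half_sum_abs_sub_eq_one_sub_sum_min {ι : Type*} [Fintype ι] {p q : ι → 𝕜}
    (hp : ∑ i, p i = 1) (hq : ∑ i, q i = 1) :
    (1 / 2) * ∑ i, |p i - q i| = 1 - ∑ i, min (p i) (q i) := by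
  simp only [abs_sub_eq_add_sub_two_mul_min, sum_sub_distrib, sum_add_distrib, ← mul_sum, hp, hq]
  ring

theorem mul_card_filter_le_sum {ι : Type*} (s : Finset ι) {f : ι → 𝕜}
    (hf : ∀ i ∈ s, 0 ≤ f i) (c : 𝕜) : c * #{i ∈ s | c ≤ f i} ≤ ∑ i ∈ s, f i :=
  calc c * #{i ∈ s | c ≤ f i} = #{i ∈ s | c ≤ f i} • c := by rw [nsmul_eq_mul, mul_comm]
    _ ≤ ∑ i ∈ s with c ≤ f i, f i := card_nsmul_le_sum _ _ _ fun i hi => (mem_filter.1 hi).2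
    _ ≤ ∑ i ∈ s, f i := sum_le_sum_of_subset_of_nonneg (filter_subset _ _) fun i hi _ => hf i hi

end TotalVariation

theorem Finset.card_add_card_le_card_inter_add_card_univ {α : Type*} [Fintype α] [DecidableEq α]
    (s t : Finset α) : #s + #t ≤ #(s ∩ t) + Fintype.card α := by
  rw [← card_union_add_card_inter, add_comm]
  exact Nat.add_le_add_left (card_le_univ _) _

theorem column_distance_from_large_entries_general
    (N : ℕ) (P : Matrix (Fin N) (Fin N) ℝ)
    (hnonneg : ∀ i j, 0 ≤ P i j) (hcol : ∀ j, ∑ i, P i j = 1)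
    (β γ : ℝ) (hγ : 0 < γ)
    (hentries : ∀ j,
      β * (N : ℝ) ≤ ((Finset.univ.filter fun i => γ / (N : ℝ) ≤ P i j).card : ℝ)) :
    ∀ j j', (1 / 2) * ∑ i, |P i j - P i j'| ≤ 1 - γ * (2 * β - 1) := by
  intro j j'
  have hN : (0 : ℝ) < N := by exact_mod_cast j.pos
  set S : Finset (Fin N) := {i | γ / N ≤ P i j}
  set T : Finset (Fin N) := {i | γ / N ≤ P i j'}
  have hinter : (2 * β - 1) * N ≤ #(S ∩ T) := by
    have hcard : (#S + #T : ℝ) ≤ #(S ∩ T) + N := by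
      exact_mod_cast Fintype.card_fin N ▸ card_add_card_le_card_inter_add_card_univ S T
    linarith [hentries j, hentries j']
  have hmin : γ * (2 * β - 1) ≤ ∑ i, min (P i j) (P i j') :=
    calc γ * (2 * β - 1) = γ / N * ((2 * β - 1) * N) := by field_simp
      _ ≤ γ / N * #{i | γ / N ≤ min (P i j) (P i j')} := by
        rw [filter_congr fun i _ => le_min_iff, filter_and]
        gcongr
      _ ≤ ∑ i, min (P i j) (P i j') :=
        mul_card_filter_le_sum _ (fun i _ => le_min (hnonneg i j) (hnonneg i j')) _
  rw [half_sum_abs_sub_eq_one_sub_sum_min (hcol j) (hcol j')]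
  linarith

/-- If in every column of an `N×N` column-stochastic matrix `P` at
least `β·N` entries are at least `γ/N` (with `β > 1/2`, `γ > 0`), then the maximum
pairwise column distance satisfies `d(P) ≤ 1 − γ·(2β − 1)`. -/
theorem column_distance_from_large_entries
    (N : ℕ) (P : Matrix (Fin N) (Fin N) ℝ)
    (hnonneg : ∀ i j, 0 ≤ P i j) (hcol : ∀ j, ∑ i, P i j = 1)
    (β γ : ℝ) (hβ : 1 / 2 < β) (hγ : 0 < γ)
    (hentries : ∀ j,
      β * (N : ℝ) ≤ ((Finset.univ.filter fun i => γ / (N : ℝ) ≤ P i j).card : ℝ)) :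
    ∀ j j', (1 / 2) * ∑ i, |P i j - P i j'| ≤ 1 - γ * (2 * β - 1) :=
  column_distance_from_large_entries_general N P hnonneg hcol β γ hγ hentries
end

section
/- Let P and Q be N×N column-stochastic real matrices. Then the maximum pairwise column distance is submultiplicative: d(PQ) ≤ d(P)·d(Q), where d(M) = max_{j,j'} (1/2)·Σ_i |M(i,j) − M(i,j')|. Consequently d(P^t) ≤ d(P)^t for every integer t ≥ 1. -/
/-!
Splitting a zero-sum vector as `x = x⁺ - x⁻`, where `∑ x⁺ = ∑ x⁻ = s = ‖x‖₁ / 2`, gives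
`s • x = ∑ⱼ ∑ₖ x⁺ⱼ x⁻ₖ (eⱼ - eₖ)`, a combination of differences of basis vectors with total
weight `s²`. Applying `P` and the triangle inequality yields Dobrushin's contraction
`‖P x‖₁ ≤ d(P) ‖x‖₁` for zero-sum `x`. Two columns of `P * Q` differ by `P` applied to the
difference of two columns of `Q`, which sums to zero when `Q` has unit column sums and has
`ℓ¹`-norm at most `2 d(Q)`. The bound for powers follows by induction from
`P ^ (t + 1) = P ^ t * P`.
-/

/-- The maximum pairwise column distance of a square matrix. -/
noncomputable def pairwiseColDist (N : ℕ) (M : Matrix (Fin N) (Fin N) ℝ) : ℝ :=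
  ⨆ p : Fin N × Fin N, (1 / 2) * ∑ i, |M i p.1 - M i p.2|

open Finset Matrix

section Contraction

variable {R : Type*} [CommRing R] {m n : Type*} [Fintype m] [Fintype n]

theorem sum_sum_mul_mul_sub (u v a : n → R) :
    ∑ j, ∑ k, u j * v k * (a j - a k) =
      (∑ k, v k) * ∑ j, u j * a j - (∑ j, u j) * ∑ k, v k * a k := by
  simp only [mul_sub, sum_sub_distrib, mul_sum, sum_mul]
  rw [sum_comm (γ := n) (f := fun j k => u j * v k * a k)]
  congr 1 <;> refine sum_congr rfl fun _ _ => sum_congr rfl fun _ _ => by ring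

variable [LinearOrder R] [IsStrictOrderedRing R]

theorem sum_negPart_eq_sum_posPart {x : n → R} (hx : ∑ j, x j = 0) :
    ∑ j, (x j)⁻ = ∑ j, (x j)⁺ := by
  have : ∑ j, ((x j)⁺ - (x j)⁻) = 0 := by simpa only [posPart_sub_negPart] using hx
  rw [sum_sub_distrib, sub_eq_zero] at this
  exact this.symm

theorem sum_posPart_mul_abs_dotProduct_le (a : n → R) {x : n → R} (hx : ∑ j, x j = 0) :
    (∑ j, (x j)⁺) * |a ⬝ᵥ x| ≤ ∑ j, ∑ k, (x j)⁺ * (x k)⁻ * |a j - a k| := by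
  have hrep : (∑ j, (x j)⁺) * (a ⬝ᵥ x) = ∑ j, ∑ k, (x j)⁺ * (x k)⁻ * (a j - a k) := by
    rw [sum_sum_mul_mul_sub, sum_negPart_eq_sum_posPart hx, ← mul_sub, ← sum_sub_distrib]
    congr 1
    exact sum_congr rfl fun j _ => by rw [← sub_mul, posPart_sub_negPart, mul_comm]
  calc (∑ j, (x j)⁺) * |a ⬝ᵥ x|
      = |∑ j, ∑ k, (x j)⁺ * (x k)⁻ * (a j - a k)| := by
        rw [← hrep, abs_mul, abs_of_nonneg (sum_nonneg fun j _ => posPart_nonneg (x j))]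
    _ ≤ ∑ j, ∑ k, |(x j)⁺ * (x k)⁻ * (a j - a k)| :=
        (abs_sum_le_sum_abs _ _).trans (sum_le_sum fun _ _ => abs_sum_le_sum_abs _ _)
    _ = ∑ j, ∑ k, (x j)⁺ * (x k)⁻ * |a j - a k| := by
        simp only [abs_mul, abs_of_nonneg (posPart_nonneg _), abs_of_nonneg (negPart_nonneg _)]

theorem two_mul_sum_abs_mulVec_le {A : Matrix m n R} {c : R}
    (hA : ∀ j k, ∑ i, |A i j - A i k| ≤ c) {x : n → R} (hx : ∑ j, x j = 0) :
    2 * ∑ i, |(A *ᵥ x) i| ≤ c * ∑ j, |x j| := by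
  set s := ∑ j, (x j)⁺
  have hnorm : ∑ j, |x j| = 2 * s := by
    simp only [← posPart_add_negPart, sum_add_distrib, sum_negPart_eq_sum_posPart hx, s, two_mul]
  have hmain : s * ∑ i, |(A *ᵥ x) i| ≤ s * (c * s) :=
    calc s * ∑ i, |(A *ᵥ x) i|
        ≤ ∑ i, ∑ j, ∑ k, (x j)⁺ * (x k)⁻ * |A i j - A i k| := by
          rw [mul_sum]; exact sum_le_sum fun i _ => sum_posPart_mul_abs_dotProduct_le (A i) hx
      _ = ∑ j, ∑ k, (x j)⁺ * (x k)⁻ * ∑ i, |A i j - A i k| := by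
          rw [sum_comm]; simp only [mul_sum]; exact sum_congr rfl fun _ _ => sum_comm
      _ ≤ ∑ j, ∑ k, (x j)⁺ * (x k)⁻ * c := by
          gcongr with j _ k _
          exact hA j k
      _ = s * (c * s) := by
          simp only [← sum_mul, ← mul_sum, sum_negPart_eq_sum_posPart hx, s]; ring
  obtain hs | hs := (sum_nonneg fun j _ => posPart_nonneg (x j) : 0 ≤ s).eq_or_lt
  · have hx0 : x = 0 := by
      have hsum : ∑ j, |x j| = 0 := by rw [hnorm, show s = 0 from hs.symm, mul_zero]
      have habs := (Fintype.sum_eq_zero_iff_of_nonneg fun j => abs_nonneg (x j)).mp hsum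
      exact funext fun j => abs_eq_zero.mp (congrFun habs j)
    simp [hx0]
  · rw [hnorm]
    linarith [le_of_mul_le_mul_left hmain hs]

end Contraction

section PairwiseColDist

variable {N : ℕ}

theorem pairwiseColDist_nonneg (M : Matrix (Fin N) (Fin N) ℝ) : 0 ≤ pairwiseColDist N M :=
  Real.iSup_nonneg fun _ => by positivity

theorem sum_abs_sub_le_two_mul_pairwiseColDist (M : Matrix (Fin N) (Fin N) ℝ) (j k : Fin N) :
    ∑ i, |M i j - M i k| ≤ 2 * pairwiseColDist N M := by
  have hjk : (1 / 2) * ∑ i, |M i j - M i k| ≤ pairwiseColDist N M :=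
    le_ciSup (f := fun p : Fin N × Fin N => (1 / 2) * ∑ i, |M i p.1 - M i p.2|)
      (Set.finite_range _).bddAbove (j, k)
  linarith

theorem pairwiseColDist_mul_le (P Q : Matrix (Fin N) (Fin N) ℝ) (hQ : ∀ j, ∑ i, Q i j = 1) :
    pairwiseColDist N (P * Q) ≤ pairwiseColDist N P * pairwiseColDist N Q := by
  refine Real.iSup_le (fun ⟨j, k⟩ => ?_)
    (mul_nonneg (pairwiseColDist_nonneg P) (pairwiseColDist_nonneg Q))
  set x : Fin N → ℝ := fun l => Q l j - Q l k
  have hx : ∑ l, x l = 0 := by simp only [x, sum_sub_distrib, hQ, sub_self]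
  have hcol : ∀ i, (P * Q) i j - (P * Q) i k = (P *ᵥ x) i := fun i => by
    simp only [mul_apply, mulVec, dotProduct, x, mul_sub, sum_sub_distrib]
  have hPx := two_mul_sum_abs_mulVec_le (sum_abs_sub_le_two_mul_pairwiseColDist P) hx
  have hx_norm := mul_le_mul_of_nonneg_left (sum_abs_sub_le_two_mul_pairwiseColDist Q j k)
    (pairwiseColDist_nonneg P)
  simp only [hcol]
  linarith

theorem pairwiseColDist_pow_le (P : Matrix (Fin N) (Fin N) ℝ) (hP : ∀ j, ∑ i, P i j = 1)
    {t : ℕ} (ht : 1 ≤ t) : pairwiseColDist N (P ^ t) ≤ pairwiseColDist N P ^ t := by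
  induction t, ht using Nat.le_induction with
  | base => rw [pow_one, pow_one]
  | succ t _ ih =>
    rw [pow_succ, pow_succ]
    exact (pairwiseColDist_mul_le _ P hP).trans <|
      mul_le_mul_of_nonneg_right ih (pairwiseColDist_nonneg P)

end PairwiseColDist

theorem pairwiseColDist_submultiplicative_general
    (N : ℕ) (P Q : Matrix (Fin N) (Fin N) ℝ)
    (hPcol : ∀ j, ∑ i, P i j = 1)
    (hQcol : ∀ j, ∑ i, Q i j = 1) :
    pairwiseColDist N (P * Q) ≤ pairwiseColDist N P * pairwiseColDist N Q
      ∧ ∀ t : ℕ, 1 ≤ t → pairwiseColDist N (P ^ t) ≤ (pairwiseColDist N P) ^ t :=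
  ⟨pairwiseColDist_mul_le P Q hQcol, fun _ => pairwiseColDist_pow_le P hPcol⟩

/-- The maximum pairwise column distance is submultiplicative for
column-stochastic matrices: `d(PQ) ≤ d(P)·d(Q)`, and consequently
`d(P^t) ≤ d(P)^t` for every `t ≥ 1`. -/
theorem pairwiseColDist_submultiplicative
    (N : ℕ) (hN : 0 < N) (P Q : Matrix (Fin N) (Fin N) ℝ)
    (hPnonneg : ∀ i j, 0 ≤ P i j) (hPcol : ∀ j, ∑ i, P i j = 1)
    (hQnonneg : ∀ i j, 0 ≤ Q i j) (hQcol : ∀ j, ∑ i, Q i j = 1) :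
    pairwiseColDist N (P * Q) ≤ pairwiseColDist N P * pairwiseColDist N Q
      ∧ ∀ t : ℕ, 1 ≤ t → pairwiseColDist N (P ^ t) ≤ (pairwiseColDist N P) ^ t :=
  pairwiseColDist_submultiplicative_general N P Q hPcol hQcol
end

section
/- For every integer n ≥ 2, Σ_{y=1}^{n−1} 1/sin(πy/n) ≤ 2·n·ln(n). -/
/-!
Jordan's inequality `sin x ≥ 2x/π` on `[0, π/2]`, applied to whichever of `πy/n` and `π(n - y)/n`
lies in that range, gives `1 / sin (πy/n) ≤ (n/2) (1/y + 1/(n - y))`. Summing over `y` and using the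
symmetry `y ↦ n - y` bounds the sum by `n · H_{n-1} ≤ n (1 + log (n - 1))`, and
`1 + log (n - 1) ≤ 2 log n` because `e (n - 1) ≤ n²`.
-/

open Real Finset

lemma one_div_sin_le_pi_div_of_le_pi_div_two {x : ℝ} (hx₀ : 0 < x) (hx : x ≤ π / 2) :
    1 / sin x ≤ π / (2 * x) := by
  rw [one_div_le (sin_pos_of_pos_of_lt_pi hx₀ (by linarith [pi_pos])) (by positivity)]
  calc 1 / (π / (2 * x)) = 2 / π * x := by field_simp
    _ ≤ sin x := mul_le_sin hx₀.le hx

lemma one_div_sin_le {x : ℝ} (hx₀ : 0 < x) (hxπ : x < π) :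
    1 / sin x ≤ π / (2 * x) + π / (2 * (π - x)) := by
  have hx : 0 < π - x := sub_pos.2 hxπ
  rcases le_total x (π / 2) with hle | hge
  · have := one_div_sin_le_pi_div_of_le_pi_div_two hx₀ hle
    have : 0 ≤ π / (2 * (π - x)) := by positivity
    linarith
  · have := one_div_sin_le_pi_div_of_le_pi_div_two hx (by linarith)
    rw [sin_pi_sub] at this
    have : 0 ≤ π / (2 * x) := by positivity
    linarith

lemma one_div_sin_pi_mul_div_le {n y : ℝ} (hy : 0 < y) (hyn : y < n) :
    1 / sin (π * y / n) ≤ n / 2 * (1 / y + 1 / (n - y)) := by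
  have hn : 0 < n := hy.trans hyn
  have hyn' : 0 < n - y := sub_pos.2 hyn
  have h := one_div_sin_le (x := π * y / n) (by positivity)
    (by rw [div_lt_iff₀ hn]; nlinarith [pi_pos])
  convert h using 2
  field_simp

lemma sum_Icc_one_div_sub_eq (n : ℕ) :
    ∑ y ∈ Icc 1 (n - 1), 1 / ((n : ℝ) - y) = ∑ y ∈ Icc 1 (n - 1), 1 / (y : ℝ) := by
  refine sum_nbij' (n - ·) (n - ·) ?_ ?_ ?_ ?_ ?_ <;> intro y hy <;> simp only [mem_Icc] at hy ⊢
  iterate 4 omega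
  rw [Nat.cast_sub (by omega)]

lemma one_add_log_sub_one_le_two_mul_log {x : ℝ} (hx : 1 < x) :
    1 + log (x - 1) ≤ 2 * log x := by
  have hx' : 0 < x - 1 := sub_pos.2 hx
  have he : exp 1 < 4 := exp_one_lt_d9.trans (by norm_num)
  calc 1 + log (x - 1) = log (exp 1 * (x - 1)) := by
        rw [log_mul (exp_pos 1).ne' hx'.ne', log_exp]
    _ ≤ log (x ^ 2) := log_le_log (by positivity) (by nlinarith [sq_nonneg (x - 2)])
    _ = 2 * log x := by rw [log_pow]; norm_num

/-- For every `n ≥ 2`, `Σ_{y=1}^{n−1} 1/sin(πy/n) ≤ 2·n·ln n`. -/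
theorem sum_inv_sin_le (n : ℕ) (hn : 2 ≤ n) :
    ∑ y ∈ Finset.Icc 1 (n - 1), 1 / Real.sin (Real.pi * y / n)
      ≤ 2 * (n : ℝ) * Real.log n := by
  have hn' : (1 : ℝ) < n := by exact_mod_cast hn
  calc ∑ y ∈ Icc 1 (n - 1), 1 / sin (π * y / n)
      ≤ ∑ y ∈ Icc 1 (n - 1), (n : ℝ) / 2 * (1 / (y : ℝ) + 1 / ((n : ℝ) - y)) := by
        refine sum_le_sum fun y hy ↦ one_div_sin_pi_mul_div_le ?_ ?_
        all_goals simp only [mem_Icc] at hy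
        · exact_mod_cast hy.1
        · exact_mod_cast (by omega : y < n)
    _ = n * harmonic (n - 1) := by
        rw [← mul_sum, sum_add_distrib, sum_Icc_one_div_sub_eq, harmonic_eq_sum_Icc]
        push_cast
        simp only [one_div]
        ring
    _ ≤ n * (1 + log (n - 1 : ℕ)) := by gcongr; exact harmonic_le_one_add_log _
    _ ≤ n * (2 * log n) := by
        gcongr
        rw [Nat.cast_sub (by omega), Nat.cast_one]
        exact one_add_log_sub_one_le_two_mul_log hn'
    _ = 2 * n * log n := by ring
end
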